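/- Let (X, τ) be an elcs with flc topology τ_F. The following are equivalent: (1) every equicontinuous subset of X* with respect to τ is equicontinuous with respect to τ_F; (2) every τ-equicontinuous subset of X* is pointwise bounded; (3) every neighborhood U of 0 in (X, τ) satisfies 0 ∈ Core(U); (4) X = X_fin, i.e., (X, τ) is a locally convex space. -/

import Mathlib

open scoped ENNReal Pointwise
open TopologicalSpace

section ElcsDefs

variable {X : Type*} [AddCommGroup X] [Module ℝ X]

/-- An extended seminorm: absolutely homogeneous (with `∞·0 = 0` conventions of `ℝ≥0∞`)
and subadditive map into `[0,∞]`. -/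
def IsExtSeminorm (ρ : X → ℝ≥0∞) : Prop :=
  (∀ (a : ℝ) (x : X), ρ (a • x) = ENNReal.ofReal |a| * ρ x) ∧
  (∀ x y : X, ρ (x + y) ≤ ρ x + ρ y)

/-- An extended norm is a definite extended seminorm. -/
def IsExtNorm (ρ : X → ℝ≥0∞) : Prop :=
  IsExtSeminorm ρ ∧ ∀ x : X, ρ x = 0 → x = 0

/-- The topology induced by a family of extended seminorms: generated by all balls. -/
def elcsTopology (P : Set (X → ℝ≥0∞)) : TopologicalSpace X :=
  TopologicalSpace.generateFrom
    {s | ∃ ρ ∈ P, ∃ c : X, ∃ ε : ℝ≥0∞, 0 < ε ∧ s = {x | ρ (x - c) < ε}}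

/-- `(X, t)` is an extended locally convex space with defining family `P`. -/
def IsELCS (t : TopologicalSpace X) (P : Set (X → ℝ≥0∞)) : Prop :=
  (∀ ρ ∈ P, IsExtSeminorm ρ) ∧ t = elcsTopology P

theorem IsExtSeminorm.map_zero {ρ : X → ℝ≥0∞} (h : IsExtSeminorm ρ) : ρ 0 = 0 := by
  have h0 := h.1 0 0
  simpa using h0

/-- The finiteness subspace `X_fin^ρ = {x : ρ x < ∞}` of an extended seminorm. -/
def finSubmodule {ρ : X → ℝ≥0∞} (h : IsExtSeminorm ρ) : Submodule ℝ X where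
  carrier := {x | ρ x < ⊤}
  add_mem' := fun {x y} hx hy =>
    lt_of_le_of_lt (h.2 x y) (ENNReal.add_lt_top.2 ⟨hx, hy⟩)
  zero_mem' := by simp [Set.mem_setOf_eq, h.map_zero]
  smul_mem' := fun a x hx => by
    simp only [Set.mem_setOf_eq, h.1 a x]
    exact ENNReal.mul_lt_top ENNReal.ofReal_lt_top hx

/-- The finite subspace `X_fin` of an elcs: points where every continuous extended
seminorm is finite. -/
def XfinSubmodule (t : TopologicalSpace X) : Submodule ℝ X where
  carrier := {x | ∀ ρ : X → ℝ≥0∞, IsExtSeminorm ρ → @Continuous X ℝ≥0∞ t _ ρ → ρ x < ⊤}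
  add_mem' := fun {x y} hx hy ρ hρ hc =>
    lt_of_le_of_lt (hρ.2 x y) (ENNReal.add_lt_top.2 ⟨hx ρ hρ hc, hy ρ hρ hc⟩)
  zero_mem' := by
    intro ρ hρ _
    rw [hρ.map_zero]
    exact ENNReal.zero_lt_top
  smul_mem' := fun a x hx ρ hρ hc => by
    have h1 := hρ.1 a x
    rw [h1]
    exact ENNReal.mul_lt_top ENNReal.ofReal_lt_top (hx ρ hρ hc)

/-- The continuous dual of `(X, t)` as a submodule of the linear dual. -/
noncomputable def dualSubmodule (t : TopologicalSpace X) : Submodule ℝ (X →ₗ[ℝ] ℝ) where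
  carrier := {f | @Continuous X ℝ t _ fun x => f x}
  add_mem' := by
    intro f g hf hg
    simp only [Set.mem_setOf_eq, LinearMap.add_apply] at *
    exact hf.add hg
  zero_mem' := by
    simp only [Set.mem_setOf_eq, LinearMap.zero_apply]
    exact @continuous_const X ℝ t _ 0
  smul_mem' := by
    intro c f hf
    simp only [Set.mem_setOf_eq, LinearMap.smul_apply, smul_eq_mul] at *
    exact (@continuous_const X ℝ t _ c).mul hf

/-- The weak topology of `(X, t)`: the initial topology induced by the continuous dual. -/
def weakTopology (t : TopologicalSpace X) : TopologicalSpace X :=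
  ⨅ f : ↥(dualSubmodule t), TopologicalSpace.induced (fun x => f.1 x) inferInstance

/-- The weak* topology on the dual of `(X, t)`: pointwise convergence on `X`. -/
def weakStarTopology (t : TopologicalSpace X) : TopologicalSpace ↥(dualSubmodule t) :=
  ⨅ x : X, TopologicalSpace.induced (fun f : ↥(dualSubmodule t) => f.1 x) inferInstance

/-- `tF` is the finest locally convex (vector) topology on `X` coarser than `t`. -/
def IsFlcTopology (t tF : TopologicalSpace X) : Prop :=
  t ≤ tF ∧ @IsTopologicalAddGroup X tF _ ∧ @ContinuousSMul ℝ X _ _ tF ∧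
    @LocallyConvexSpace ℝ X _ _ _ _ tF ∧
    ∀ t' : TopologicalSpace X, t ≤ t' → @IsTopologicalAddGroup X t' _ →
      @ContinuousSMul ℝ X _ _ t' → @LocallyConvexSpace ℝ X _ _ _ _ t' → tF ≤ t'

/-- A set `A` is bounded in an elcs: for every neighborhood `U` of `0` there are `r > 0`
and a finite `F ⊆ A` with `A ⊆ F + r • U`. -/
def ElcsBounded (t : TopologicalSpace X) (A : Set X) : Prop :=
  ∀ U ∈ @nhds X t 0, ∃ r : ℝ, 0 < r ∧ ∃ F : Set X, F.Finite ∧ F ⊆ A ∧ A ⊆ F + r • U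

/-- `0 ∈ Core U`: `U` absorbs every point of `X`. -/
def ZeroInCore (U : Set X) : Prop :=
  ∀ x : X, ∃ δ : ℝ, 0 < δ ∧ ∀ s : ℝ, 0 ≤ s → s ≤ δ → s • x ∈ U

/-- A family of linear functionals is equicontinuous on `(X, t)` if it is uniformly bounded
by `1` on some neighborhood of `0`. -/
def EquicontSet (t : TopologicalSpace X) (A : Set (X →ₗ[ℝ] ℝ)) : Prop :=
  ∃ U ∈ @nhds X t 0, ∀ f ∈ A, ∀ x ∈ U, |f x| ≤ 1

/-- The extended-seminorm-valued sup functional `ρ_A(x) = sup_{f ∈ A} |f x|`. -/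
noncomputable def dualSupFun (A : Set (X →ₗ[ℝ] ℝ)) : X → ℝ≥0∞ :=
  fun x => ⨆ f ∈ A, ENNReal.ofReal |f x|

/-- The topology on the dual of uniform convergence on members of a family `𝔅` of subsets
of `X`. -/
def ucTopology (t : TopologicalSpace X) (𝔅 : Set (Set X)) :
    TopologicalSpace ↥(dualSubmodule t) :=
  TopologicalSpace.generateFrom
    {s | ∃ B ∈ 𝔅, ∃ g : ↥(dualSubmodule t), ∃ ε : ℝ≥0∞, 0 < ε ∧
      s = {f | (⨆ x ∈ B, ENNReal.ofReal |f.1 x - g.1 x|) < ε}}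

/-- A vector topology is normable if it is induced by a single everywhere-finite
extended norm, i.e. by a norm. -/
def IsNormableTop {Y : Type*} [AddCommGroup Y] [Module ℝ Y] (t : TopologicalSpace Y) : Prop :=
  ∃ ρ : Y → ℝ≥0∞, IsExtNorm ρ ∧ (∀ y, ρ y < ⊤) ∧ t = elcsTopology {ρ}

/-- `Y` has countable (algebraic) dimension over `ℝ`. -/
def HasCountableDim (Y : Type*) [AddCommGroup Y] [Module ℝ Y] : Prop :=
  ∃ s : Set Y, s.Countable ∧ Submodule.span ℝ s = ⊤

/-- The Minkowski functional of a set, with values in `[0,∞]` (`inf ∅ = ∞`). -/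
noncomputable def minkowskiE (U : Set X) : X → ℝ≥0∞ :=
  fun x => sInf (ENNReal.ofReal '' {r : ℝ | 0 < r ∧ x ∈ r • U})

end ElcsDefs

section FunctionSpaces

variable {Y : Type*} [TopologicalSpace Y]

/-- The subspace of continuous functions that are bounded on `B`. -/
def boundedOnSubmodule (B : Set Y) : Submodule ℝ C(Y, ℝ) where
  carrier := {f | ∃ M : ℝ, ∀ x ∈ B, |f x| ≤ M}
  add_mem' := by
    rintro f g ⟨M, hM⟩ ⟨N, hN⟩
    exact ⟨M + N, fun x hx => (abs_add_le _ _).trans (add_le_add (hM x hx) (hN x hx))⟩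
  zero_mem' := ⟨0, by simp⟩
  smul_mem' := by
    rintro c f ⟨M, hM⟩
    refine ⟨|c| * M, fun x hx => ?_⟩
    simp only [ContinuousMap.smul_apply, smul_eq_mul, abs_mul]
    exact mul_le_mul_of_nonneg_left (hM x hx) (abs_nonneg c)

/-- The sup extended seminorm `ρ_B` on `C(Y, ℝ)` associated to `B ⊆ Y`. -/
noncomputable def supExtSeminorm (B : Set Y) : C(Y, ℝ) → ℝ≥0∞ :=
  fun f => ⨆ x ∈ B, ENNReal.ofReal |f x|

end FunctionSpaces

/-!
Every `ρ ∈ P` is continuous for the topology it generates. Hence if `X = X_fin`, every `ρ ∈ P` is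
finite, `s ↦ s • x` is continuous at `0`, and every neighbourhood of `0` is absorbing. An
equicontinuous family is then pointwise bounded, so its pointwise supremum is a finite seminorm
that is at most `1` on a `τ`-neighbourhood of `0`; the topology of this seminorm is locally convex
and coarser than `τ`, hence coarser than `τ_F`, and the family is `τ_F`-equicontinuous.

Conversely, if a continuous extended seminorm has `ρ x₀ = ∞`, a linear functional `g` vanishing on
`{ρ < ∞}` with `g x₀ = 1` makes all multiples of `g` an equicontinuous family unbounded at `x₀`.
Since `τ_F` is a vector topology its neighbourhoods of `0` are absorbing, so this family is not
`τ_F`-equicontinuous either.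
-/

open Filter Topology

namespace IsExtSeminorm

variable {X : Type*} [AddCommGroup X] [Module ℝ X] {ρ : X → ℝ≥0∞}

theorem map_neg (h : IsExtSeminorm ρ) (x : X) : ρ (-x) = ρ x := by
  simpa using h.1 (-1) x

theorem map_sub_comm (h : IsExtSeminorm ρ) (x y : X) : ρ (x - y) = ρ (y - x) := by
  rw [← neg_sub, h.map_neg]

theorem le_add_map_sub (h : IsExtSeminorm ρ) (x y : X) : ρ x ≤ ρ y + ρ (x - y) := by
  simpa using h.2 y (x - y)

theorem continuous_of_ball_mem_nhds [TopologicalSpace X] (h : IsExtSeminorm ρ)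
    (hball : ∀ x ε, 0 < ε → {y | ρ (y - x) < ε} ∈ 𝓝 x) : Continuous ρ := by
  refine continuous_iff_continuousAt.2 fun x => tendsto_order.2 ⟨fun a ha => ?_, fun a ha => ?_⟩
  · obtain ⟨ε, hε, haε⟩ := ENNReal.lt_iff_exists_add_pos_lt.1 ha
    filter_upwards [hball x ε (by exact_mod_cast hε)] with y hy
    have : a + ε < ρ y + ε := haε.trans_le <| (h.le_add_map_sub x y).trans <| by
      rw [h.map_sub_comm]; gcongr
    exact (ENNReal.add_lt_add_iff_right ENNReal.coe_ne_top).1 this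
  · obtain ⟨ε, hε, haε⟩ := ENNReal.lt_iff_exists_add_pos_lt.1 ha
    filter_upwards [hball x ε (by exact_mod_cast hε)] with y hy
    calc ρ y ≤ ρ x + ρ (y - x) := h.le_add_map_sub y x
      _ ≤ ρ x + ε := by gcongr
      _ < a := haε

theorem exists_linearMap_eq_one (h : IsExtSeminorm ρ) {x₀ : X} (hx₀ : ρ x₀ = ⊤) :
    ∃ g : X →ₗ[ℝ] ℝ, g x₀ = 1 ∧ ∀ x, ρ x < ⊤ → g x = 0 := by
  have hx₀' : x₀ ∉ finSubmodule h := fun hx => (show ρ x₀ < ⊤ from hx).ne hx₀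
  obtain ⟨f, hfx₀, hf⟩ := Submodule.exists_dual_map_eq_bot_of_notMem hx₀' inferInstance
  refine ⟨(f x₀)⁻¹ • f, by simp [hfx₀], fun x hx => ?_⟩
  have hfx : f x ∈ (finSubmodule h).map f := Submodule.mem_map_of_mem hx
  rw [hf, Submodule.mem_bot] at hfx
  simp [hfx]

end IsExtSeminorm

section Topology

variable {X : Type*} [AddCommGroup X] [Module ℝ X]

theorem IsExtSeminorm.setOf_lt_one_mem_nhds_zero [TopologicalSpace X] {ρ : X → ℝ≥0∞}
    (h : IsExtSeminorm ρ) (hc : Continuous ρ) : {x | ρ x < 1} ∈ 𝓝 (0 : X) :=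
  hc.continuousAt.preimage_mem_nhds (Iio_mem_nhds (by simp [h.map_zero]))

theorem XfinSubmodule_eq_top_of_zeroInCore (t : TopologicalSpace X)
    (hcore : ∀ U ∈ @nhds X t 0, ZeroInCore U) : XfinSubmodule t = ⊤ := by
  refine Submodule.eq_top_iff'.2 fun x ρ hρ hc => ?_
  obtain ⟨δ, hδ, hδx⟩ := hcore _ (hρ.setOf_lt_one_mem_nhds_zero hc) x
  have h1 : ENNReal.ofReal δ * ρ x < 1 := by
    simpa [hρ.1, abs_of_pos hδ] using hδx δ hδ.le le_rfl
  exact ENNReal.lt_top_of_mul_ne_top_right (h1.trans ENNReal.one_lt_top).ne (by simpa using hδ)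

theorem XfinSubmodule_eq_top_of_pointwise_bounded (t : TopologicalSpace X)
    (h : ∀ A, EquicontSet t A → ∀ x : X, ∃ M : ℝ, ∀ f ∈ A, |f x| ≤ M) :
    XfinSubmodule t = ⊤ := by
  by_contra hne
  obtain ⟨x₀, -, hx₀⟩ := SetLike.exists_of_lt (lt_top_iff_ne_top.2 hne)
  simp only [XfinSubmodule, Submodule.mem_mk, AddSubmonoid.mem_mk, AddSubsemigroup.mem_mk,
    Set.mem_ofPred_eq, not_forall, not_lt, top_le_iff] at hx₀
  obtain ⟨ρ, hρ, hc, hx₀⟩ := hx₀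
  obtain ⟨g, hgx₀, hg⟩ := hρ.exists_linearMap_eq_one hx₀
  have hA : EquicontSet t (Set.range fun c : ℝ => c • g) := by
    refine ⟨_, hρ.setOf_lt_one_mem_nhds_zero hc, ?_⟩
    rintro _ ⟨c, rfl⟩ x hx
    simp [hg x (hx.trans ENNReal.one_lt_top)]
  obtain ⟨M, hM⟩ := h _ hA x₀
  have := hM ((|M| + 1) • g) ⟨_, rfl⟩
  rw [LinearMap.smul_apply, hgx₀, smul_eq_mul, mul_one] at this
  linarith [le_abs_self M, le_abs_self (|M| + 1)]

theorem zeroInCore_of_tendsto_smul (t : TopologicalSpace X)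
    (h : ∀ x : X, Tendsto (fun s : ℝ => s • x) (𝓝 0) (@nhds X t 0)) {U : Set X}
    (hU : U ∈ @nhds X t 0) : ZeroInCore U := by
  intro x
  obtain ⟨δ, hδ, hball⟩ := Metric.mem_nhds_iff.1 (h x hU)
  refine ⟨δ / 2, half_pos hδ, fun s hs0 hs => hball ?_⟩
  rw [Metric.mem_ball, Real.dist_0_eq_abs, abs_of_nonneg hs0]
  linarith

theorem EquicontSet.pointwise_bounded {t : TopologicalSpace X} {A : Set (X →ₗ[ℝ] ℝ)}
    (hcore : ∀ U ∈ @nhds X t 0, ZeroInCore U) (hA : EquicontSet t A) (x : X) :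
    ∃ M : ℝ, ∀ f ∈ A, |f x| ≤ M := by
  obtain ⟨U, hU, hAU⟩ := hA
  obtain ⟨δ, hδ, hδx⟩ := hcore U hU x
  refine ⟨1 / δ, fun f hf => ?_⟩
  have h1 := hAU f hf _ (hδx δ hδ.le le_rfl)
  rw [map_smul, smul_eq_mul, abs_mul, abs_of_pos hδ] at h1
  rwa [le_div_iff₀ hδ, mul_comm]

theorem exists_seminorm_of_pointwise_bounded {A : Set (X →ₗ[ℝ] ℝ)}
    (hA : ∀ x : X, ∃ M : ℝ, ∀ f ∈ A, |f x| ≤ M) :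
    ∃ p : Seminorm ℝ X, (∀ f ∈ A, ∀ x, |f x| ≤ p x) ∧
      ∀ x c, 0 ≤ c → (∀ f ∈ A, |f x| ≤ c) → p x ≤ c := by
  let q : A → Seminorm ℝ X := fun f => (normSeminorm ℝ ℝ).comp f.1
  have hbdd : ∀ x, BddAbove (Set.range fun f : A => |f.1 x|) := fun x =>
    let ⟨M, hM⟩ := hA x
    ⟨M, Set.forall_mem_range.2 fun f => hM f f.2⟩
  have hsup : ∀ x, (⨆ f, q f) x = ⨆ f : A, |f.1 x| := fun x => by
    rw [Seminorm.coe_iSup_eq (Seminorm.bddAbove_range_iff.2 hbdd), iSup_apply]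
    rfl
  refine ⟨⨆ f, q f, fun f hf x => ?_, fun x c hc hx => ?_⟩
  · rw [hsup]
    exact le_ciSup (f := fun f : A => |f.1 x|) (hbdd x) ⟨f, hf⟩
  · rw [hsup]
    exact Real.iSup_le (fun f => hx f f.2) hc

theorem IsFlcTopology.ball_mem_nhds_zero {t tF : TopologicalSpace X} (hF : IsFlcTopology t tF)
    (p : Seminorm ℝ X) (hp : ∀ x, ∀ r > 0, p.ball x r ∈ @nhds X t x) :
    p.ball 0 1 ∈ @nhds X tF 0 := by
  let q : SeminormFamily ℝ X Unit := fun _ => p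
  let t' : TopologicalSpace X := q.moduleFilterBasis.topology
  have hq : WithSeminorms q := ⟨rfl⟩
  have htt' : t ≤ t' := (le_iff_nhds _ _).2 fun x => hq.hasBasis_ball.ge_iff.2 fun sr hr =>
    Filter.mem_of_superset (hp x sr.2 hr) (Seminorm.ball_antitone (Finset.sup_le fun _ _ => le_rfl))
  have htFt' := hF.2.2.2.2 t' htt' hq.topologicalAddGroup hq.continuousSMul hq.toLocallyConvexSpace
  exact nhds_mono htFt' (hq.hasBasis.mem_of_mem (q.basisSets_singleton_mem () one_pos))

end Topology

namespace elcsTopology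

variable {X : Type*} [AddCommGroup X] [Module ℝ X] {P : Set (X → ℝ≥0∞)}

theorem ball_mem_nhds (hP : ∀ ρ ∈ P, IsExtSeminorm ρ) {ρ : X → ℝ≥0∞} (hρ : ρ ∈ P) (x : X)
    {ε : ℝ≥0∞} (hε : 0 < ε) : {y | ρ (y - x) < ε} ∈ @nhds X (elcsTopology P) x :=
  @IsOpen.mem_nhds X (elcsTopology P) _ _
    (TopologicalSpace.isOpen_generateFrom_of_mem ⟨ρ, hρ, x, ε, hε, rfl⟩)
    (by simpa [(hP ρ hρ).map_zero] using hε)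

theorem continuous_of_mem (hP : ∀ ρ ∈ P, IsExtSeminorm ρ) {ρ : X → ℝ≥0∞} (hρ : ρ ∈ P) :
    Continuous[elcsTopology P, _] ρ :=
  @IsExtSeminorm.continuous_of_ball_mem_nhds X _ _ ρ (elcsTopology P) (hP ρ hρ)
    fun x _ hε => ball_mem_nhds hP hρ x hε

theorem continuous_smul_sub (hP : ∀ ρ ∈ P, IsExtSeminorm ρ) (a : ℝ) (c : X) :
    Continuous[elcsTopology P, elcsTopology P] fun y => a • (y - c) := by
  rcases eq_or_ne a 0 with rfl | ha
  · simpa using @continuous_const X X (elcsTopology P) (elcsTopology P) 0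
  refine continuous_generateFrom_iff.2 ?_
  rintro _ ⟨ρ, hρ, b, ε, hε, rfl⟩
  have ha' : ENNReal.ofReal |a| ≠ 0 := by simpa using ha
  have hpre : (fun y => a • (y - c)) ⁻¹' {z | ρ (z - b) < ε} =
      {y | ρ (y - (c + a⁻¹ • b)) < ε / ENNReal.ofReal |a|} := by
    ext y
    have hy : a • (y - c) - b = a • (y - (c + a⁻¹ • b)) := by
      simp only [smul_sub, smul_add, smul_inv_smul₀ ha]
      abel
    simp only [Set.mem_preimage, Set.mem_ofPred_eq, hy, (hP ρ hρ).1,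
      ENNReal.lt_div_iff_mul_lt (Or.inl ha') (Or.inl ENNReal.ofReal_ne_top), mul_comm]
  rw [hpre]
  exact TopologicalSpace.isOpen_generateFrom_of_mem
    ⟨ρ, hρ, _, _, ENNReal.div_pos hε.ne' ENNReal.ofReal_ne_top, rfl⟩

theorem seminorm_ball_mem_nhds (hP : ∀ ρ ∈ P, IsExtSeminorm ρ) {U : Set X}
    (hU : U ∈ @nhds X (elcsTopology P) 0) (p : Seminorm ℝ X) (hpU : ∀ x ∈ U, p x ≤ 1) (x : X)
    {r : ℝ} (hr : 0 < r) : p.ball x r ∈ @nhds X (elcsTopology P) x := by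
  let _ := elcsTopology P
  have hpre : {y | (2 / r) • (y - x) ∈ U} ∈ @nhds X (elcsTopology P) x :=
    (continuous_smul_sub hP (2 / r) x).continuousAt.preimage_mem_nhds (by simpa using hU)
  refine Filter.mem_of_superset hpre fun y hy => ?_
  have h1 := hpU _ hy
  rw [map_smul_eq_mul, Real.norm_eq_abs, abs_of_pos (by positivity)] at h1
  rw [Seminorm.mem_ball]
  calc p (y - x) = r / 2 * (2 / r * p (y - x)) := by field_simp
    _ ≤ r / 2 * 1 := by gcongr
    _ < r := by linarith

theorem tendsto_smul_nhds_zero (hP : ∀ ρ ∈ P, IsExtSeminorm ρ) {x : X}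
    (hx : ∀ ρ ∈ P, ρ x ≠ ⊤) :
    Tendsto (fun s : ℝ => s • x) (𝓝 0) (@nhds X (elcsTopology P) 0) := by
  rw [elcsTopology, TopologicalSpace.nhds_generateFrom]
  refine tendsto_iInf.2 fun V => tendsto_iInf.2 fun ⟨hV0, ρ, hρ, c, ε, _, hV⟩ => ?_
  subst hV
  have hρ' := hP ρ hρ
  have hlim : Tendsto (fun s : ℝ => ρ (-c) + ENNReal.ofReal |s| * ρ x) (𝓝 0) (𝓝 (ρ (-c))) := by
    have := (ENNReal.Tendsto.mul_const (ENNReal.tendsto_ofReal (continuous_abs.tendsto 0))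
      (Or.inr (hx ρ hρ))).const_add (ρ (-c))
    simpa using this
  refine tendsto_principal.2 ((hlim.eventually_lt_const (by simpa using hV0)).mono fun s hs => ?_)
  calc ρ (s • x - c) ≤ ρ (-c) + ρ (s • x) := by
        rw [sub_eq_add_neg, add_comm]; exact hρ'.2 _ _
    _ = ρ (-c) + ENNReal.ofReal |s| * ρ x := by rw [hρ'.1]
    _ < ε := hs

theorem zeroInCore_of_XfinSubmodule_eq_top (hP : ∀ ρ ∈ P, IsExtSeminorm ρ)
    (hfin : XfinSubmodule (elcsTopology P) = ⊤) :
    ∀ U ∈ @nhds X (elcsTopology P) 0, ZeroInCore U := by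
  refine fun U => zeroInCore_of_tendsto_smul _ fun x => tendsto_smul_nhds_zero hP fun ρ hρ => ?_
  have hx : x ∈ XfinSubmodule (elcsTopology P) := hfin ▸ Submodule.mem_top
  exact (hx ρ (hP ρ hρ) (continuous_of_mem hP hρ)).ne

theorem equicontSet_of_XfinSubmodule_eq_top (hP : ∀ ρ ∈ P, IsExtSeminorm ρ)
    (hfin : XfinSubmodule (elcsTopology P) = ⊤) {tF : TopologicalSpace X}
    (hF : IsFlcTopology (elcsTopology P) tF) {A : Set (X →ₗ[ℝ] ℝ)}
    (hA : EquicontSet (elcsTopology P) A) : EquicontSet tF A := by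
  obtain ⟨p, hAp, hp_le⟩ := exists_seminorm_of_pointwise_bounded
    (hA.pointwise_bounded (zeroInCore_of_XfinSubmodule_eq_top hP hfin))
  obtain ⟨U, hU, hAU⟩ := hA
  have hpU : ∀ x ∈ U, p x ≤ 1 := fun x hx => hp_le x 1 zero_le_one fun f hf => hAU f hf x hx
  have hball := hF.ball_mem_nhds_zero p fun x r hr => seminorm_ball_mem_nhds hP hU p hpU x hr
  exact ⟨_, hball, fun f hf x hx => (hAp f hf x).trans (p.mem_ball_zero.1 hx).le⟩

end elcsTopology

/-- equicontinuity characterizations of `X = X_fin`. -/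
theorem stmt14 {X : Type*} [AddCommGroup X] [Module ℝ X]
    (t tF : TopologicalSpace X) (P : Set (X → ℝ≥0∞)) (hP : IsELCS t P)
    (hF : IsFlcTopology t tF) :
    ((∀ A : Set (X →ₗ[ℝ] ℝ), EquicontSet t A → EquicontSet tF A) ↔
        XfinSubmodule t = (⊤ : Submodule ℝ X)) ∧
    ((∀ A : Set (X →ₗ[ℝ] ℝ), EquicontSet t A →
        ∀ x : X, ∃ M : ℝ, ∀ f ∈ A, |f x| ≤ M) ↔
        XfinSubmodule t = (⊤ : Submodule ℝ X)) ∧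
    ((∀ U ∈ @nhds X t 0, ZeroInCore U) ↔
        XfinSubmodule t = (⊤ : Submodule ℝ X)) := by
  obtain ⟨hP, rfl⟩ := hP
  have h34 : (∀ U ∈ @nhds X (elcsTopology P) 0, ZeroInCore U) ↔
      XfinSubmodule (elcsTopology P) = ⊤ :=
    ⟨XfinSubmodule_eq_top_of_zeroInCore _, elcsTopology.zeroInCore_of_XfinSubmodule_eq_top hP⟩
  have h24 : (∀ A, EquicontSet (elcsTopology P) A → ∀ x : X, ∃ M : ℝ, ∀ f ∈ A, |f x| ≤ M) ↔
      XfinSubmodule (elcsTopology P) = ⊤ :=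
    ⟨XfinSubmodule_eq_top_of_pointwise_bounded _,
      fun hfin _ hA => hA.pointwise_bounded (h34.2 hfin)⟩
  have hcoreF : ∀ U ∈ @nhds X tF 0, ZeroInCore U := by
    let _ := tF
    have : ContinuousSMul ℝ X := hF.2.2.1
    exact fun U => zeroInCore_of_tendsto_smul _ fun x =>
      (continuous_id.smul continuous_const).tendsto' 0 0 (zero_smul ℝ x)
  exact ⟨⟨fun h1 => h24.1 fun A hA => (h1 A hA).pointwise_bounded hcoreF,
    fun hfin _ hA => elcsTopology.equicontSet_of_XfinSubmodule_eq_top hP hfin hF hA⟩, h24, h34⟩
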